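/- arXiv:1212.3161 — 3 statements merged into one kernel-verified Lean document; each statement's English description precedes it below -/
import Mathlib

section
/- For the function ℓ(r) = 2(log(1 + (1 + (r/2)^(-2))^(-1/2)) - log(1 - (1 + (r/2)^(-2))^(-1/2))) defined for r > 0, there exists a constant c > 0 such that ℓ(r) ≥ c · log(1 + r) for all r > 0. -/
open Real

/-- The translation-length function `ℓ(r)` of Lemma `eval`. -/
noncomputable def unipLength (r : ℝ) : ℝ :=
  2 * (Real.log (1 + (1 + (r / 2) ^ (-(2 : ℝ))) ^ (-(1 : ℝ) / 2)) -
       Real.log (1 - (1 + (r / 2) ^ (-(2 : ℝ))) ^ (-(1 : ℝ) / 2)))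

/-- There is a constant `c > 0` with `ℓ(r) ≥ c · log (1 + r)` for all `r > 0`. -/
theorem stmt0 : ∃ c : ℝ, 0 < c ∧ ∀ r : ℝ, 0 < r →
    c * Real.log (1 + r) ≤ unipLength r := by
  refine ⟨1, one_pos, fun r hr => ?_⟩
  set t : ℝ := r / 2 with ht
  have ht0 : 0 < t := by positivity
  set s : ℝ := Real.sqrt (1 + t ^ 2) with hs
  have hs2 : s ^ 2 = 1 + t ^ 2 := Real.sq_sqrt (by positivity)
  have hsnn : 0 ≤ s := Real.sqrt_nonneg _
  have hs1 : 1 ≤ s := by nlinarith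
  have hst : t < s := by nlinarith
  have hs0 : 0 < s := lt_of_lt_of_le one_pos hs1
  -- compute the inner rpow expression
  have hbase : (1 : ℝ) + (r / 2) ^ (-(2 : ℝ)) = (s / t) ^ 2 := by
    rw [show (r / 2 : ℝ) = t from rfl,
      Real.rpow_neg ht0.le, show ((2 : ℝ)) = ((2 : ℕ) : ℝ) by norm_num,
      Real.rpow_natCast]
    field_simp
    nlinarith
  have hu : (1 + (r / 2) ^ (-(2 : ℝ))) ^ (-(1 : ℝ) / 2) = t / s := by
    rw [hbase, show (-(1 : ℝ) / 2) = -(1 / 2) by ring,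
      Real.rpow_neg (by positivity), ← Real.sqrt_eq_rpow,
      Real.sqrt_sq (by positivity)]
    rw [inv_div]
  have hone : (1 : ℝ) + t / s = (s + t) / s := by field_simp
  have htwo : (1 : ℝ) - t / s = (s - t) / s := by field_simp
  have hkey : unipLength r = 2 * Real.log ((s + t) ^ 2) := by
    rw [unipLength, hu, hone, htwo]
    have h1 : (0:ℝ) < (s + t) / s := by positivity
    have h2 : (0:ℝ) < (s - t) / s := div_pos (by linarith) hs0
    rw [← Real.log_div (ne_of_gt h1) (ne_of_gt h2)]
    have hd : (s + t) / s / ((s - t) / s) = (s + t) / (s - t) := by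
      field_simp
    have harg : (s + t) / (s - t) = (s + t) ^ 2 := by
      rw [div_eq_iff (by linarith : s - t ≠ 0)]
      nlinarith
    rw [hd, harg]
  have hge : 1 + r ≤ (s + t) ^ 2 := by
    have : r = 2 * t := by rw [ht]; ring
    nlinarith
  have hlog : Real.log (1 + r) ≤ Real.log ((s + t) ^ 2) :=
    Real.log_le_log (by linarith) hge
  have hnn : 0 ≤ Real.log (1 + r) := Real.log_nonneg (by linarith)
  rw [hkey]
  linarith
end

section
/- Let Λ be a lattice in ℂ (a discrete subgroup of rank 2) with covolume vol(Λ), first minimum α₁(Λ) and second minimum α₂(Λ). If N*_Λ(r) denotes the number of nonzero lattice points of absolute value at most r, then there is an absolute constant C such that for all r ≥ α₁(Λ), |N*_Λ(r) − πr²/vol(Λ)| ≤ C(r/α₁(Λ) + α₂(Λ)/α₁(Λ)). -/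
open Set

/-- `N*_Λ(r)`: number of nonzero lattice points of absolute value at most `r`. -/
noncomputable def latticeCount (L : Submodule ℤ ℂ) (r : ℝ) : ℕ :=
  Nat.card {v : ℂ // v ∈ L ∧ v ≠ 0 ∧ ‖v‖ ≤ r}

open Submodule MeasureTheory ZSpan Bornology ENNReal Pointwise


lemma exists_good_basis (L : Submodule ℤ ℂ) (a₁ a₂ : ℝ) (v₁ v₂ : ℂ)
    (h1 : IsLeast {t : ℝ | ∃ v ∈ L, v ≠ 0 ∧ ‖v‖ = t} a₁)
    (hv1L : v₁ ∈ L) (hv1a : ‖v₁‖ = a₁)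
    (hv2L : v₂ ∈ L) (hv2s : v₂ ∉ Submodule.span ℤ {v₁}) (hv2a : ‖v₂‖ = a₂)
    (h2lb : ∀ t ∈ {t : ℝ | ∃ v ∈ L, v ∉ Submodule.span ℤ {v₁} ∧ ‖v‖ = t}, a₂ ≤ t) :
    ∃ b : Module.Basis (Fin 2) ℝ ℂ, b 0 = v₁ ∧ b 1 = v₂ ∧ Submodule.span ℤ (Set.range ⇑b) = L := by
  have ha₁pos : 0 < a₁ := by
    obtain ⟨v, hvL, hv0, hva⟩ := h1.1
    rw [← hva]; exact norm_pos_iff.mpr hv0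
  have hv1ne : v₁ ≠ 0 := by
    intro h; rw [h, norm_zero] at hv1a; linarith
  have hsmall : ∀ w, w ∈ L → ‖w‖ < a₁ → w = 0 := by
    intro w hwL hw
    by_contra h0
    exact absurd (h1.2 ⟨w, hwL, h0, rfl⟩) (not_le.mpr hw)
  have ha12 : a₁ ≤ a₂ := by
    refine h1.2 ⟨v₂, hv2L, ?_, hv2a⟩
    intro h; rw [h] at hv2s; exact hv2s (Submodule.zero_mem _)
  have ha₂pos : 0 < a₂ := lt_of_lt_of_le ha₁pos ha12
  -- no nonzero real multiple of v₁ closer than a₁ exists in L off the ℤ-span trivially: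
  have hnotreal : ∀ c : ℝ, v₂ ≠ c • v₁ := by
    intro c hc
    set n : ℤ := round c with hn
    have hmem : v₂ - n • v₁ ∈ L := Submodule.sub_mem _ hv2L (Submodule.smul_mem _ n hv1L)
    have habs : ‖v₂ - n • v₁‖ < a₁ := by
      have : v₂ - n • v₁ = (c - (n : ℝ)) • v₁ := by
        rw [hc, sub_smul]; norm_num
      rw [this]
      have : ‖(c - (n:ℝ)) • v₁‖ = |c - (n:ℝ)| * a₁ := by
        rw [← hv1a, norm_smul, Real.norm_eq_abs]
      rw [this]
      have hr : |c - (n:ℝ)| ≤ 1/2 := abs_sub_round c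
      nlinarith
    have := hsmall _ hmem habs
    have : v₂ = n • v₁ := by rwa [sub_eq_zero] at this
    exact hv2s (this ▸ Submodule.smul_mem _ n (Submodule.mem_span_singleton_self v₁))
  have hli : LinearIndependent ℝ ![v₁, v₂] := by
    rw [LinearIndependent.pair_iff]
    intro s t hst
    by_cases ht : t = 0
    · subst ht
      simp only [zero_smul, add_zero, smul_eq_zero] at hst
      exact ⟨hst.resolve_right hv1ne, rfl⟩
    · exfalso
      have h2 : t • v₂ = (-s) • v₁ := by
        linear_combination (norm := module) hst
      have : v₂ = (-s/t) • v₁ := by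
        have ht' : (t:ℂ) ≠ 0 := Complex.ofReal_ne_zero.mpr ht
        simp only [Complex.real_smul] at h2 ⊢
        push_cast at h2 ⊢
        field_simp at h2 ⊢
        linear_combination h2
      exact hnotreal _ this
  refine ⟨basisOfLinearIndependentOfCardEqFinrank hli (by simp [Complex.finrank_real_complex]), ?_, ?_, ?_⟩
  · simp [coe_basisOfLinearIndependentOfCardEqFinrank]
  · simp [coe_basisOfLinearIndependentOfCardEqFinrank]
  set b := basisOfLinearIndependentOfCardEqFinrank hli (by simp [Complex.finrank_real_complex]) with hbdef
  have hb0 : b 0 = v₁ := by simp [hbdef, coe_basisOfLinearIndependentOfCardEqFinrank]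
  have hb1 : b 1 = v₂ := by simp [hbdef, coe_basisOfLinearIndependentOfCardEqFinrank]
  have hv1mem : v₁ ∈ Set.range ⇑b := ⟨0, hb0⟩
  have hv2mem : v₂ ∈ Set.range ⇑b := ⟨1, hb1⟩
  have hexp : ∀ w : ℂ, w = b.repr w 0 • v₁ + b.repr w 1 • v₂ := by
    intro w
    conv_lhs => rw [← b.sum_repr w]
    rw [Fin.sum_univ_two, hb0, hb1]
  have hrepr1 : b.repr v₁ = Finsupp.single 0 1 := by rw [← hb0]; exact b.repr_self 0
  have hrepr2 : b.repr v₂ = Finsupp.single 1 1 := by rw [← hb1]; exact b.repr_self 1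
  have habs_comb : ∀ s t : ℝ, ‖s • v₁ + t • v₂‖ ≤ |s| * a₁ + |t| * a₂ := by
    intro s t
    refine (norm_add_le _ _).trans ?_
    rw [norm_smul, norm_smul, hv1a, hv2a,
      Real.norm_eq_abs, Real.norm_eq_abs]
  have hzs : ∀ (n : ℤ) (v : ℂ), ((n : ℝ)) • v = n • v := fun n v =>
    Int.cast_smul_eq_zsmul ℝ n v
  -- key: for w ∈ L the reduced vector coordinates
  have hkey : ∀ w ∈ L, ∃ m n : ℤ, w = m • v₁ + n • v₂ := by
    intro w hw
    set x := b.repr w 0 with hx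
    set y := b.repr w 1 with hy
    set u' : ℂ := w - ((round y : ℝ)) • v₂ - ((round x : ℝ)) • v₁ with hu'
    have hu'L : u' ∈ L := by
      rw [hu', hzs, hzs]
      exact Submodule.sub_mem _ (Submodule.sub_mem _ hw
        (Submodule.smul_mem _ _ hv2L)) (Submodule.smul_mem _ _ hv1L)
    have hru0 : b.repr u' 0 = x - round x := by
      rw [hu', map_sub, map_sub, _root_.map_smul, _root_.map_smul, hrepr1, hrepr2]
      simp [Finsupp.single_apply, hx]
    have hru1 : b.repr u' 1 = y - round y := by
      rw [hu', map_sub, map_sub, _root_.map_smul, _root_.map_smul, hrepr1, hrepr2]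
      simp [Finsupp.single_apply, hy]
    have hu'exp : u' = (x - round x) • v₁ + (y - round y) • v₂ := by
      conv_lhs => rw [hexp u']
      rw [hru0, hru1]
    have hxr : |x - round x| ≤ 1/2 := abs_sub_round x
    have hyr : |y - round y| ≤ 1/2 := abs_sub_round y
    have hyint : y = round y := by
      by_contra hy0
      have hy' : y - round y ≠ 0 := sub_ne_zero.mpr hy0
      have hnotspan : u' ∉ Submodule.span ℤ {v₁} := by
        intro hmem
        obtain ⟨n, hn⟩ := Submodule.mem_span_singleton.mp hmem
        have h5 : b.repr u' 1 = 0 := by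
          rw [← hn, ← hzs, _root_.map_smul, hrepr1]
          simp [Finsupp.single_apply]
        rw [hru1] at h5
        exact hy' h5
      have hlow : a₂ ≤ ‖u'‖ := h2lb _ ⟨u', hu'L, hnotspan, rfl⟩
      by_cases hx0 : x - round x = 0
      · have : ‖u'‖ ≤ 1/2 * a₂ := by
          rw [hu'exp, hx0, zero_smul, zero_add, norm_smul,
            hv2a, Real.norm_eq_abs]
          nlinarith [abs_nonneg (y - round y)]
        linarith
      · have hns : ¬ SameRay ℝ ((x - round x) • v₁) ((y - round y) • v₂) := by
          intro hsr
          have h1ne : (x - round x) • v₁ ≠ 0 := smul_ne_zero hx0 hv1ne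
          have h2ne : (y - round y) • v₂ ≠ 0 := smul_ne_zero hy' (by
            intro h; rw [h, norm_zero] at hv2a; linarith)
          obtain ⟨r, hr, hre⟩ := hsr.exists_pos_left h1ne h2ne
          have hcomb : (r * (x - round x)) • v₁ + (-(y - round y)) • v₂ = 0 := by
            rw [← smul_smul, neg_smul, hre]; abel
          have h6 := (LinearIndependent.pair_iff.mp hli _ _ hcomb).2
          rw [neg_eq_zero] at h6
          exact hy' h6
        have hstrict : ‖u'‖ < |x - round x| * a₁ + |y - round y| * a₂ := by
          rw [hu'exp]
          calc ‖(x - round x) • v₁ + (y - round y) • v₂‖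
              < ‖(x - round x) • v₁‖ + ‖(y - round y) • v₂‖ := norm_add_lt_of_not_sameRay hns
            _ = |x - round x| * a₁ + |y - round y| * a₂ := by
                rw [norm_smul, norm_smul, hv1a, hv2a,
                  Real.norm_eq_abs, Real.norm_eq_abs]
        nlinarith
    -- now y is an integer; the reduced vector lies on the line of v₁
    have hu'exp2 : u' = (x - round x) • v₁ := by
      rw [hu'exp, hyint]
      simp
    have hxint : x = round x := by
      have habs : ‖u'‖ < a₁ := by
        rw [hu'exp2, norm_smul, hv1a,
          Real.norm_eq_abs]
        nlinarith
      have h7 := hsmall _ hu'L habs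
      rw [hu'exp2] at h7
      rcases smul_eq_zero.mp h7 with h | h
      · have := sub_eq_zero.mp h; linarith
      · exact absurd h hv1ne
    refine ⟨round x, round y, ?_⟩
    have h8 := hexp w
    rw [← hx, ← hy, hxint, hyint, hzs, hzs] at h8
    exact h8
  refine le_antisymm (Submodule.span_le.mpr ?_) ?_
  · rintro z ⟨i, rfl⟩
    fin_cases i
    · rw [show b ⟨0, by norm_num⟩ = v₁ from hb0]; exact hv1L
    · rw [show b ⟨1, by norm_num⟩ = v₂ from hb1]; exact hv2L
  · intro w hw
    obtain ⟨m, n, rfl⟩ := hkey w hw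
    exact Submodule.add_mem _ (Submodule.smul_mem _ m (Submodule.subset_span hv1mem))
      (Submodule.smul_mem _ n (Submodule.subset_span hv2mem))

lemma vol_fd_basisOneI : volume (fundamentalDomain Complex.basisOneI) = 1 := by
  have hset : fundamentalDomain Complex.basisOneI
      = Complex.measurableEquivRealProd ⁻¹' (Set.Ico 0 1 ×ˢ Set.Ico 0 1) := by
    ext z
    simp only [mem_fundamentalDomain, Set.mem_preimage, Set.mem_prod, Set.mem_Ico,
      Complex.measurableEquivRealProd, Homeomorph.toMeasurableEquiv_coe]
    constructor
    · intro h
      have h0 := h 0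
      have h1 := h 1
      rw [show (Complex.basisOneI.repr z) 0 = ![z.re,z.im] 0 from congrFun (Complex.coe_basisOneI_repr z) 0] at h0
      rw [show (Complex.basisOneI.repr z) 1 = ![z.re,z.im] 1 from congrFun (Complex.coe_basisOneI_repr z) 1] at h1
      simp at h0 h1
      exact ⟨h0, h1⟩
    · intro ⟨h0, h1⟩ i
      fin_cases i <;> rw [show ∀ j, (Complex.basisOneI.repr z) j = ![z.re,z.im] j from congrFun (Complex.coe_basisOneI_repr z)] <;> simpa
  rw [hset, Complex.volume_preserving_equiv_real_prod.measure_preimage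
    (by measurability)]
  rw [Measure.volume_eq_prod, Measure.prod_prod]
  simp [Real.volume_Ico]


lemma det_formula (b : Module.Basis (Fin 2) ℝ ℂ) (v₁ v₂ : ℂ) (h0 : b 0 = v₁) (h1 : b 1 = v₂) :
    Complex.basisOneI.det ⇑b = v₁.re * v₂.im - v₂.re * v₁.im := by
  rw [Module.Basis.det_apply, Matrix.det_fin_two]
  simp only [Module.Basis.toMatrix_apply, h0, h1]
  rw [show ∀ z j, (Complex.basisOneI.repr z) j = ![z.re,z.im] j from fun z => congrFun (Complex.coe_basisOneI_repr z), show ∀ z j, (Complex.basisOneI.repr z) j = ![z.re,z.im] j from fun z => congrFun (Complex.coe_basisOneI_repr z)]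
  simp

lemma lattice_ball_finite (L : Submodule ℤ ℂ) [DiscreteTopology L] (r : ℝ) :
    {v : ℂ | v ∈ L ∧ ‖v‖ ≤ r}.Finite := by
  have h1 : {v : ℂ | v ∈ L ∧ ‖v‖ ≤ r}
      = Metric.closedBall 0 r ∩ (L.toAddSubgroup : Set ℂ) := by
    ext v
    simp [Metric.mem_closedBall, dist_zero_right, and_comm]
  rw [h1]
  have : DiscreteTopology L.toAddSubgroup := (inferInstance : DiscreteTopology L)
  exact Metric.finite_isBounded_inter_isClosed DiscreteTopology.isDiscrete Metric.isBounded_closedBall inferInstance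


lemma counting_estimate (L : Submodule ℤ ℂ) (b : Module.Basis (Fin 2) ℝ ℂ)
    (hspan : Submodule.span ℤ (Set.range ⇑b) = L) (r : ℝ) (hr : 0 ≤ r)
    {S : Set ℂ} (hS : S = {v : ℂ | v ∈ L ∧ ‖v‖ ≤ r}) (hfin : S.Finite) :
    ENNReal.ofReal (r - (‖b 0‖ + ‖b 1‖)) ^ 2 * NNReal.pi
      ≤ (hfin.toFinset.card : ℝ≥0∞) * volume (fundamentalDomain b) ∧
    (hfin.toFinset.card : ℝ≥0∞) * volume (fundamentalDomain b)
      ≤ ENNReal.ofReal (r + (‖b 0‖ + ‖b 1‖)) ^ 2 * NNReal.pi := by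
  set d : ℝ := ‖b 0‖ + ‖b 1‖ with hd
  have hd0 : 0 ≤ d := by positivity
  set F : Set ℂ := fundamentalDomain b with hF
  have hmeasF : MeasurableSet F := fundamentalDomain_measurableSet b
  have hFd : ∀ f ∈ F, ‖f‖ ≤ d := by
    intro f hf
    have := norm_fract_le b f
    rw [fract_eq_self.mpr hf] at this
    simpa [Fin.sum_univ_two] using this
  set T := hfin.toFinset with hT
  have hTmem : ∀ v, v ∈ T ↔ v ∈ L ∧ ‖v‖ ≤ r := by
    intro v; rw [hT, Set.Finite.mem_toFinset, hS]; rfl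
  -- disjointness of translates
  have hdisj : (T : Set ℂ).Pairwise fun u v => Disjoint (u +ᵥ F) (v +ᵥ F) := by
    intro u hu v hv huv
    rw [Set.disjoint_left]
    rintro z ⟨f, hf, rfl⟩ ⟨g, hg, he⟩
    simp only [vadd_eq_add] at he
    apply huv
    have hu' : u ∈ Submodule.span ℤ (Set.range ⇑b) := by
      rw [hspan]; exact ((hTmem u).mp (by simpa using hu)).1
    have hv' : v ∈ Submodule.span ℤ (Set.range ⇑b) := by
      rw [hspan]; exact ((hTmem v).mp (by simpa using hv)).1
    have h1 : fract b (u + f) = f := by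
      rw [fract_zSpan_add b f hu', fract_eq_self.mpr hf]
    have h2 : fract b (u + f) = g := by
      rw [← he, fract_zSpan_add b g hv', fract_eq_self.mpr hg]
    have hfg : f = g := h1.symm.trans h2
    rw [← hfg] at he
    exact (add_right_cancel he).symm
  have hvol : volume (⋃ v ∈ T, v +ᵥ F) = (T.card : ℝ≥0∞) * volume F := by
    rw [measure_biUnion_finset hdisj (fun v _ => by
      simpa [vadd_eq_add] using hmeasF.const_vadd v)]
    simp_rw [measure_vadd]
    simp [Finset.sum_const, nsmul_eq_mul]
  constructor
  · -- lower bound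
    rw [← hvol, ← Complex.volume_closedBall 0 (r - d)]
    apply measure_mono
    intro z hz
    rw [Metric.mem_closedBall, dist_zero_right] at hz
    have hvL : z - fract b z ∈ L := by
      rw [← hspan]
      have : z - fract b z = ((floor b z : ℂ)) := by rw [fract_apply]; ring
      rw [this]
      exact SetLike.coe_mem _
    have hfr : fract b z ∈ F := fract_mem_fundamentalDomain b z
    have habs : ‖z - fract b z‖ ≤ r := by
      calc ‖z - fract b z‖ ≤ ‖z‖ + ‖fract b z‖ := norm_sub_le _ _
        _ ≤ (r - d) + d := add_le_add hz (hFd _ hfr)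
        _ = r := by ring
    refine Set.mem_biUnion ((hTmem _).mpr ⟨hvL, habs⟩) ?_
    exact ⟨fract b z, hfr, by simp only [vadd_eq_add]; ring⟩
  · -- upper bound
    rw [← hvol, ← Complex.volume_closedBall 0 (r + d)]
    apply measure_mono
    intro z hz
    rw [Set.mem_iUnion₂] at hz
    obtain ⟨v, hv, f, hf, rfl⟩ := hz
    rw [Metric.mem_closedBall, dist_zero_right]
    simp only [vadd_eq_add]
    calc ‖v + f‖ ≤ ‖v‖ + ‖f‖ := norm_add_le _ _
      _ ≤ r + d := add_le_add (by exact ((hTmem v).mp hv).2) (hFd _ hf)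


lemma gauss_ineq1 {a₁ a₂ D P : ℝ} (ha₁ : 0 < a₁) (ha12 : a₁ ≤ a₂)
    (hid : D^2 + P^2 = a₁^2 * a₂^2) (h2Ple : 2*P ≤ a₁^2) (h2Pge : -(a₁^2) ≤ 2*P) :
    a₁ * a₂ / 2 ≤ |D| := by
  have hP2 : 4*P^2 ≤ a₁^4 := by
    nlinarith [mul_nonneg (by linarith : (0:ℝ) ≤ a₁^2 - 2*P) (by linarith : (0:ℝ) ≤ a₁^2 + 2*P)]
  have hsq12 : a₁^2 ≤ a₂^2 := by nlinarith
  have ha14 : a₁^4 ≤ a₁^2 * a₂^2 := by nlinarith [mul_le_mul_of_nonneg_left hsq12 (sq_nonneg a₁)]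
  have hD2 : (a₁*a₂/2)^2 ≤ |D|^2 := by
    rw [sq_abs]; nlinarith
  nlinarith [abs_nonneg D, mul_pos ha₁ (lt_of_lt_of_le ha₁ ha12)]

lemma gauss_ineq2 {r d ND : ℝ} (hr0 : 0 ≤ r) (hd0 : 0 < d) (hnn : 0 ≤ ND)
    (hup : ND ≤ (r+d)^2 * Real.pi) (hlow : d ≤ r → (r-d)^2 * Real.pi ≤ ND) :
    |ND - Real.pi * r^2| ≤ Real.pi * (2*r*d + d^2) := by
  have epi : 0 ≤ Real.pi := Real.pi_pos.le
  have h2rd : 0 ≤ Real.pi * (2*r*d) := by positivity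
  have hpd2 : 0 ≤ Real.pi * d^2 := by positivity
  have epre : Real.pi*(2*r*d+d^2) = Real.pi*(2*r*d) + Real.pi*d^2 := by ring
  have eup : (r + d)^2 * Real.pi = Real.pi*r^2 + Real.pi*(2*r*d) + Real.pi*d^2 := by ring
  rw [abs_le]
  constructor
  · rcases le_or_gt d r with hrd | hrd
    · have elow : (r - d)^2 * Real.pi = Real.pi*r^2 - Real.pi*(2*r*d) + Real.pi*d^2 := by ring
      have := hlow hrd
      linarith
    · have h9 : Real.pi * r^2 ≤ Real.pi * d^2 := by
        have h10 : r^2 ≤ d^2 := by nlinarith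
        exact mul_le_mul_of_nonneg_left h10 epi
      linarith
  · linarith

lemma gauss_ineq3 {r a₁ a₂ Dabs : ℝ} (ha₁ : 0 < a₁) (ha12 : a₁ ≤ a₂) (hr0 : 0 ≤ r)
    (hD : a₁ * a₂ / 2 ≤ Dabs) :
    Real.pi * (2*r*(a₁+a₂) + (a₁+a₂)^2) * a₁ ≤ 32 * (r + a₂) * Dabs := by
  have ha₂ : 0 < a₂ := lt_of_lt_of_le ha₁ ha12
  have hX : 2*r*(a₁+a₂) + (a₁+a₂)^2 ≤ 4*r*a₂ + 4*a₂^2 := by nlinarith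
  have hXnn : (0:ℝ) ≤ 2*r*(a₁+a₂) + (a₁+a₂)^2 := by positivity
  have t1 : Real.pi * (2*r*(a₁+a₂) + (a₁+a₂)^2) ≤ 4 * (2*r*(a₁+a₂) + (a₁+a₂)^2) :=
    mul_le_mul_of_nonneg_right Real.pi_le_four hXnn
  have t2 : Real.pi * (2*r*(a₁+a₂) + (a₁+a₂)^2) * a₁
      ≤ 4 * (2*r*(a₁+a₂) + (a₁+a₂)^2) * a₁ := mul_le_mul_of_nonneg_right t1 ha₁.le
  have t3 : 4 * (2*r*(a₁+a₂) + (a₁+a₂)^2) * a₁ ≤ 4 * (4*r*a₂ + 4*a₂^2) * a₁ := by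
    have := mul_le_mul_of_nonneg_right hX ha₁.le
    nlinarith
  have h32 : 4 * (4*r*a₂ + 4*a₂^2) * a₁ ≤ 32 * (r + a₂) * Dabs := by
    nlinarith [mul_nonneg (by linarith : (0:ℝ) ≤ r + a₂) (by linarith : (0:ℝ) ≤ Dabs - a₁*a₂/2)]
  linarith

set_option maxHeartbeats 1000000 in
/-- Gauss counting estimate: there is an absolute constant `C` such that for every
lattice `Λ ⊂ ℂ` with covolume `vol(Λ)`, first minimum `α₁` and second minimum `α₂`
(relative to any shortest vector `v₁`), and every `r ≥ α₁`,
`|N*_Λ(r) − πr²/vol(Λ)| ≤ C (r/α₁ + α₂/α₁)`. -/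
theorem stmt2 :
    ∃ C : ℝ, 0 < C ∧
      ∀ (L : Submodule ℤ ℂ) (_ : DiscreteTopology L),
        IsZLattice ℝ L →
        ∀ (a₁ a₂ : ℝ) (v₁ : ℂ),
          IsLeast {t : ℝ | ∃ v ∈ L, v ≠ 0 ∧ ‖v‖ = t} a₁ →
          v₁ ∈ L → ‖v₁‖ = a₁ →
          IsLeast {t : ℝ | ∃ v ∈ L, v ∉ Submodule.span ℤ {v₁} ∧ ‖v‖ = t} a₂ →
          ∀ r : ℝ, a₁ ≤ r →
            |(latticeCount L r : ℝ) - Real.pi * r ^ 2 / ZLattice.covolume L|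
              ≤ C * (r / a₁ + a₂ / a₁) := by
  classical
  refine ⟨33, by norm_num, ?_⟩
  intro L hDisc hZL a₁ a₂ v₁ h1 hv1L hv1a h2 r hr
  haveI := hDisc
  haveI := hZL
  obtain ⟨v₂, hv2L, hv2s, hv2a⟩ := h2.1
  obtain ⟨b, hb0, hb1, hspan⟩ := exists_good_basis L a₁ a₂ v₁ v₂ h1 hv1L hv1a hv2L hv2s hv2a
    (fun t ht => h2.2 ht)
  -- basic positivity facts
  have ha₁pos : 0 < a₁ := by
    obtain ⟨v, hvL, hv0, hva⟩ := h1.1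
    rw [← hva]; exact norm_pos_iff.mpr hv0
  have ha12 : a₁ ≤ a₂ := by
    refine h1.2 ⟨v₂, hv2L, ?_, hv2a⟩
    intro h; rw [h] at hv2s; exact hv2s (Submodule.zero_mem _)
  have ha₂pos : 0 < a₂ := lt_of_lt_of_le ha₁pos ha12
  have hr0 : 0 ≤ r := le_trans ha₁pos.le hr
  -- the covolume as a determinant
  set D : ℝ := v₁.re * v₂.im - v₂.re * v₁.im with hD
  have hvolF : MeasureTheory.volume (ZSpan.fundamentalDomain b) = ENNReal.ofReal |D| := by
    rw [ZSpan.measure_fundamentalDomain b MeasureTheory.volume Complex.basisOneI,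
      vol_fd_basisOneI, mul_one, det_formula b v₁ v₂ hb0 hb1]
  have hV : ZLattice.covolume L = |D| := by
    have hfund : MeasureTheory.IsAddFundamentalDomain L (ZSpan.fundamentalDomain b)
        MeasureTheory.volume := hspan ▸ (ZSpan.isAddFundamentalDomain b MeasureTheory.volume)
    rw [ZLattice.covolume_eq_measure_fundamentalDomain L MeasureTheory.volume hfund, measureReal_def, hvolF,
      ENNReal.toReal_ofReal (abs_nonneg _)]
  -- lower bound for the covolume: |D| ≥ a₁ a₂ / 2
  have h1sq : a₁^2 = v₁.re^2 + v₁.im^2 := by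
    rw [← hv1a, Complex.sq_norm, Complex.normSq_apply]; ring
  have h2sq : a₂^2 = v₂.re^2 + v₂.im^2 := by
    rw [← hv2a, Complex.sq_norm, Complex.normSq_apply]; ring
  set P : ℝ := v₁.re * v₂.re + v₁.im * v₂.im with hP
  have hid : D^2 + P^2 = a₁^2 * a₂^2 := by rw [h1sq, h2sq, hD, hP]; ring
  have hplus : a₂ ≤ ‖v₂ + v₁‖ := by
    refine h2.2 ⟨v₂ + v₁, Submodule.add_mem _ hv2L hv1L, ?_, rfl⟩
    intro hmem
    obtain ⟨n, hn⟩ := Submodule.mem_span_singleton.mp hmem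
    refine hv2s (Submodule.mem_span_singleton.mpr ⟨n - 1, ?_⟩)
    rw [sub_smul, one_smul, hn]; ring
  have hminus : a₂ ≤ ‖v₂ - v₁‖ := by
    refine h2.2 ⟨v₂ - v₁, Submodule.sub_mem _ hv2L hv1L, ?_, rfl⟩
    intro hmem
    obtain ⟨n, hn⟩ := Submodule.mem_span_singleton.mp hmem
    refine hv2s (Submodule.mem_span_singleton.mpr ⟨n + 1, ?_⟩)
    rw [add_smul, one_smul, hn]; ring
  have hplussq : (‖v₂ + v₁‖)^2 = a₂^2 + 2*P + a₁^2 := by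
    rw [Complex.sq_norm, Complex.normSq_apply, h1sq, h2sq, hP]
    simp only [Complex.add_re, Complex.add_im]
    ring
  have hminussq : (‖v₂ - v₁‖)^2 = a₂^2 - 2*P + a₁^2 := by
    rw [Complex.sq_norm, Complex.normSq_apply, h1sq, h2sq, hP]
    simp only [Complex.sub_re, Complex.sub_im]
    ring
  have h2Ple : 2*P ≤ a₁^2 := by
    have := pow_le_pow_left₀ ha₂pos.le hminus 2
    rw [hminussq] at this
    linarith
  have h2Pge : -(a₁^2) ≤ 2*P := by
    have := pow_le_pow_left₀ ha₂pos.le hplus 2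
    rw [hplussq] at this
    linarith
  have hDlow : a₁ * a₂ / 2 ≤ |D| := gauss_ineq1 ha₁pos ha12 hid h2Ple h2Pge
  have hDpos : 0 < |D| := lt_of_lt_of_le (by positivity) hDlow
  -- counting
  have hfin : {v : ℂ | v ∈ L ∧ ‖v‖ ≤ r}.Finite := lattice_ball_finite L r
  obtain ⟨hlowE, hupE⟩ := counting_estimate L b hspan r hr0 rfl hfin
  set N : ℕ := hfin.toFinset.card with hN
  set d : ℝ := a₁ + a₂ with hd
  have hd0 : 0 < d := by positivity
  have hbd : ‖b 0‖ + ‖b 1‖ = d := by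
    rw [hb0, hb1, hv1a, hv2a]
  rw [hbd] at hlowE hupE
  have hNV_ne_top : (N : ℝ≥0∞) * MeasureTheory.volume (ZSpan.fundamentalDomain b) ≠ ⊤ := by
    rw [hvolF]
    exact ENNReal.mul_ne_top (ENNReal.natCast_ne_top N) ENNReal.ofReal_ne_top
  have htoReal_NV : ((N : ℝ≥0∞) * MeasureTheory.volume (ZSpan.fundamentalDomain b)).toReal
      = (N : ℝ) * |D| := by
    rw [hvolF, ENNReal.toReal_mul, ENNReal.toReal_ofReal (abs_nonneg _)]
    simp
  have hupR : (N : ℝ) * |D| ≤ (r + d)^2 * Real.pi := by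
    have h := ENNReal.toReal_mono (by
      exact ENNReal.mul_ne_top (pow_ne_top ENNReal.ofReal_ne_top) ENNReal.coe_ne_top) hupE
    rw [htoReal_NV] at h
    rw [ENNReal.toReal_mul, ENNReal.toReal_pow, ENNReal.toReal_ofReal (by positivity),
      ENNReal.coe_toReal, NNReal.coe_real_pi] at h
    exact h
  have hkey : |(N:ℝ) * |D| - Real.pi * r^2| ≤ Real.pi * (2*r*d + d^2) := by
    refine gauss_ineq2 hr0 hd0 (by positivity) hupR ?_
    intro hrd
    have h := ENNReal.toReal_mono hNV_ne_top hlowE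
    rw [htoReal_NV] at h
    rw [ENNReal.toReal_mul, ENNReal.toReal_pow, ENNReal.toReal_ofReal (by linarith),
      ENNReal.coe_toReal, NNReal.coe_real_pi] at h
    exact h
  -- translate to the normalized count
  have hkey2 : abs ((N:ℝ) - Real.pi * r^2 / |D|) ≤ 32 * (r/a₁ + a₂/a₁) := by
    rw [show (N:ℝ) - Real.pi*r^2/|D| = ((N:ℝ)*|D| - Real.pi*r^2)/|D| by field_simp,
      abs_div, abs_of_pos hDpos, div_le_iff₀ hDpos]
    have h3 : Real.pi * (2*r*d + d^2) * a₁ ≤ 32 * (r + a₂) * |D| := by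
      rw [hd]; exact gauss_ineq3 ha₁pos ha12 hr0 hDlow
    have hrw : 32 * (r/a₁ + a₂/a₁) * |D| = (32 * (r + a₂) * |D|) / a₁ := by
      field_simp
      try ring
    rw [hrw, le_div_iff₀ ha₁pos]
    calc |(N:ℝ) * |D| - Real.pi * r^2| * a₁ ≤ (Real.pi * (2*r*d + d^2)) * a₁ :=
          mul_le_mul_of_nonneg_right hkey ha₁pos.le
      _ ≤ 32 * (r + a₂) * |D| := h3
  -- relate N to latticeCount
  have h0S : (0:ℂ) ∈ {v : ℂ | v ∈ L ∧ ‖v‖ ≤ r} := by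
    refine ⟨Submodule.zero_mem _, ?_⟩
    rw [norm_zero]; exact hr0
  have hcount : latticeCount L r = N - 1 := by
    have e1 : latticeCount L r = {v : ℂ | v ∈ L ∧ v ≠ 0 ∧ ‖v‖ ≤ r}.ncard :=
      Nat.card_coe_set_eq _
    have e2 : {v : ℂ | v ∈ L ∧ v ≠ 0 ∧ ‖v‖ ≤ r}
        = {v : ℂ | v ∈ L ∧ ‖v‖ ≤ r} \ {0} := by
      ext v
      simp only [Set.mem_setOf_eq, Set.mem_diff, Set.mem_singleton_iff]
      tauto
    have e3 : ({v : ℂ | v ∈ L ∧ ‖v‖ ≤ r} \ {0}).ncard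
        = {v : ℂ | v ∈ L ∧ ‖v‖ ≤ r}.ncard - 1 :=
      Set.ncard_diff_singleton_of_mem h0S
    have e4 : {v : ℂ | v ∈ L ∧ ‖v‖ ≤ r}.ncard = N := by
      rw [Set.ncard_eq_toFinset_card _ hfin]
    rw [e1, e2, e3, e4]
  have hN1 : 1 ≤ N := by
    rw [hN]
    refine Finset.card_pos.mpr ⟨0, ?_⟩
    rw [Set.Finite.mem_toFinset]
    exact h0S
  have hcastc : ((latticeCount L r : ℕ) : ℝ) = (N : ℝ) - 1 := by
    rw [hcount, Nat.cast_sub hN1, Nat.cast_one]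
  -- finish
  have hX1 : 1 ≤ r/a₁ := (one_le_div ha₁pos).mpr hr
  have hX2 : 0 < a₂/a₁ := by positivity
  rw [hV, hcastc]
  rw [abs_le] at hkey2 ⊢
  constructor <;> linarith [hkey2.1, hkey2.2]
end

section
/- Let μ_n be a sequence of positive Borel measures on [0,∞) such that ∫₀^∞ e^{−λ} dμ_n(λ) ≤ c for some c > 0 and all n, and suppose there exist λ₀, C, α > 0 such that μ_n((0,λ]) ≤ Cλ^α for all n and all 0 < λ ≤ λ₀. Then lim_{t₀→∞} sup_n ∫_{t₀}^{∞} (∫_{(0,∞)} e^{−λt} dμ_n(λ)) t^{−1} dt = 0. -/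
open Set MeasureTheory Filter

set_option maxHeartbeats 1000000 in
/-- Proposition `svp`: let `μ_n` be positive measures on `[0,∞)` with
`∫ e^{−λ} dμ_n(λ) ≤ c` uniformly in `n`, and suppose `μ_n((0,λ]) ≤ Cλ^α` for all `n` and
`0 < λ ≤ λ₀`. Then `lim_{t₀→∞} sup_n ∫_{t₀}^∞ (∫_{(0,∞)} e^{−λt} dμ_n(λ)) dt/t = 0`. -/
theorem stmt14 (μ : ℕ → Measure ℝ) (hsupp : ∀ n, μ n (Set.Iio 0) = 0)
    (c : ℝ) (hc : 0 < c)
    (hint : ∀ n, ∫ l, Real.exp (-l) ∂(μ n) ≤ c)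
    (hintble : ∀ n, Integrable (fun l => Real.exp (-l)) (μ n))
    (lam₀ C α : ℝ) (hlam₀ : 0 < lam₀) (hC : 0 < C) (hα : 0 < α)
    (hsmall : ∀ n, ∀ lam : ℝ, 0 < lam → lam ≤ lam₀ → (μ n (Ioc 0 lam)).toReal ≤ C * lam ^ α) :
    ∀ ε : ℝ, 0 < ε → ∃ T : ℝ, ∀ t₀ : ℝ, T ≤ t₀ → ∀ n,
      (∫ t in Ioi t₀, (∫ l in Ioi (0:ℝ), Real.exp (-l * t) ∂(μ n)) / t) ≤ ε := by
  intro ε hε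
  obtain ⟨δ, hδ, hδα, hδ1⟩ : ∃ δ : ℝ, 0 < δ ∧ δ ≤ α / 2 ∧ δ ≤ 1 :=
    ⟨min (α / 2) 1, lt_min (by linarith) one_pos, min_le_left _ _, min_le_right _ _⟩
  set K : ℝ := C * 2 ^ α + C * lam₀ ^ α + 27 * c * Real.exp lam₀ / lam₀ ^ 3 with hKdef
  have hKpos : 0 < K := by
    have h1 : 0 < C * 2 ^ α := mul_pos hC (Real.rpow_pos_of_pos two_pos α)
    have h2 : 0 < C * lam₀ ^ α := mul_pos hC (Real.rpow_pos_of_pos hlam₀ α)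
    have h3 : 0 < 27 * c * Real.exp lam₀ / lam₀ ^ 3 := by positivity
    rw [hKdef]; linarith
  set X : ℝ := K / (ε * δ) with hXdef
  have hXpos : 0 < X := by rw [hXdef]; positivity
  refine ⟨max (max 3 (4 / lam₀ ^ 2)) (X ^ (1 / δ : ℝ)), fun t₀ ht₀ n => ?_⟩
  have ht₀3 : (3 : ℝ) ≤ t₀ := le_trans (le_trans (le_max_left _ _) (le_max_left _ _)) ht₀
  have ht₀4 : 4 / lam₀ ^ 2 ≤ t₀ := le_trans (le_trans (le_max_right _ _) (le_max_left _ _)) ht₀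
  have ht₀X : X ^ (1 / δ : ℝ) ≤ t₀ := le_trans (le_max_right _ _) ht₀
  have ht₀pos : (0 : ℝ) < t₀ := by linarith
  have hnn : ∀ᵐ l ∂(μ n), 0 ≤ l := by
    rw [ae_iff]
    simpa [Set.Iio, not_le] using hsupp n
  have hfin : μ n (Ioc 0 lam₀) < ⊤ := by
    refine lt_of_le_of_lt (measure_mono ?_)
      ((hintble n).measure_ge_lt_top (Real.exp_pos (-lam₀)))
    intro l hl
    exact Real.exp_le_exp.2 (neg_le_neg hl.2)
  -- the key pointwise bound
  have key : ∀ t : ℝ, t₀ < t →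
      (∫ l in Ioi (0:ℝ), Real.exp (-l * t) ∂(μ n)) / t ≤ K * t ^ (-1 - δ : ℝ) := by
    intro t ht
    have ht3 : (3 : ℝ) ≤ t := by linarith
    have htpos : (0 : ℝ) < t := by linarith
    have ht1 : (1 : ℝ) ≤ t := by linarith
    have hlogpos : 0 < Real.log t := Real.log_pos (by linarith)
    set β : ℝ := Real.log t / t with hβdef
    have hβpos : 0 < β := div_pos hlogpos htpos
    have hsq : Real.sqrt t ^ 2 = t := Real.sq_sqrt htpos.le
    have hsqnn : 0 ≤ Real.sqrt t := Real.sqrt_nonneg t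
    have hsqrt : Real.log t ≤ 2 * Real.sqrt t := by
      have h1 := Real.log_le_sub_one_of_pos (Real.sqrt_pos.2 htpos)
      have h2 : Real.log (Real.sqrt t) = Real.log t / 2 := Real.log_sqrt htpos.le
      nlinarith
    have ht4 : 4 / lam₀ ^ 2 ≤ t := by linarith
    have hlamsq : 2 ≤ lam₀ * Real.sqrt t := by
      have h4 : 4 ≤ lam₀ ^ 2 * t := by
        rw [div_le_iff₀ (by positivity)] at ht4; linarith
      have h5 : (lam₀ * Real.sqrt t) ^ 2 = lam₀ ^ 2 * t := by rw [mul_pow, hsq]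
      nlinarith [h5, mul_nonneg hlam₀.le hsqnn]
    have hβlam : β ≤ lam₀ := by
      rw [hβdef, div_le_iff₀ htpos]
      nlinarith
    have hIt : Integrable (fun l => Real.exp (-l * t)) (μ n) := by
      refine (hintble n).mono ?_ ?_
      · exact (Real.continuous_exp.comp
          (continuous_id.neg.mul continuous_const)).aestronglyMeasurable
      · filter_upwards [hnn] with l hl
        simp only [Real.norm_eq_abs, Real.abs_exp]
        exact Real.exp_le_exp.2 (by nlinarith)
    have hsplit1 : (∫ l in Ioi (0:ℝ), Real.exp (-l * t) ∂(μ n))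
        = (∫ l in Ioc (0:ℝ) lam₀, Real.exp (-l * t) ∂(μ n))
          + ∫ l in Ioi lam₀, Real.exp (-l * t) ∂(μ n) := by
      rw [← setIntegral_union Ioc_disjoint_Ioi_same measurableSet_Ioi
        hIt.integrableOn hIt.integrableOn, Ioc_union_Ioi_eq_Ioi hlam₀.le]
    have hsplit2 : (∫ l in Ioc (0:ℝ) lam₀, Real.exp (-l * t) ∂(μ n))
        = (∫ l in Ioc (0:ℝ) β, Real.exp (-l * t) ∂(μ n))
          + ∫ l in Ioc β lam₀, Real.exp (-l * t) ∂(μ n) := by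
      rw [← setIntegral_union (Ioc_disjoint_Ioc_of_le le_rfl) measurableSet_Ioc
        hIt.integrableOn hIt.integrableOn, Ioc_union_Ioc_eq_Ioc hβpos.le hβlam]
    -- bound (a)
    have hAbound : (∫ l in Ioc (0:ℝ) β, Real.exp (-l * t) ∂(μ n)) ≤ C * β ^ α := by
      have hfin' : μ n (Ioc 0 β) < ⊤ :=
        lt_of_le_of_lt (measure_mono (Ioc_subset_Ioc_right hβlam)) hfin
      calc (∫ l in Ioc (0:ℝ) β, Real.exp (-l * t) ∂(μ n))
          ≤ ‖∫ l in Ioc (0:ℝ) β, Real.exp (-l * t) ∂(μ n)‖ := le_abs_self _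
        _ ≤ 1 * (μ n (Ioc 0 β)).toReal := by
            refine norm_setIntegral_le_of_norm_le_const hfin' (fun x hx => ?_)
            simp only [Real.norm_eq_abs, Real.abs_exp]
            exact Real.exp_le_one_iff.2 (by nlinarith [hx.1])
        _ ≤ C * β ^ α := by rw [one_mul]; exact hsmall n β hβpos hβlam
    -- bound (b)
    have hBbound : (∫ l in Ioc β lam₀, Real.exp (-l * t) ∂(μ n))
        ≤ Real.exp (-Real.log t) * (C * lam₀ ^ α) := by
      have hfin' : μ n (Ioc β lam₀) < ⊤ :=
        lt_of_le_of_lt (measure_mono (Ioc_subset_Ioc_left hβpos.le)) hfin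
      have hβt : β * t = Real.log t := div_mul_cancel₀ _ htpos.ne'
      calc (∫ l in Ioc β lam₀, Real.exp (-l * t) ∂(μ n))
          ≤ ‖∫ l in Ioc β lam₀, Real.exp (-l * t) ∂(μ n)‖ := le_abs_self _
        _ ≤ Real.exp (-Real.log t) * (μ n (Ioc β lam₀)).toReal := by
            refine norm_setIntegral_le_of_norm_le_const hfin' (fun x hx => ?_)
            simp only [Real.norm_eq_abs, Real.abs_exp]
            refine Real.exp_le_exp.2 ?_
            rw [← hβt]
            nlinarith [hx.1]
        _ ≤ Real.exp (-Real.log t) * (C * lam₀ ^ α) := by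
            refine mul_le_mul_of_nonneg_left ?_ (Real.exp_nonneg _)
            calc (μ n (Ioc β lam₀)).toReal
                ≤ (μ n (Ioc 0 lam₀)).toReal :=
                  ENNReal.toReal_mono hfin.ne (measure_mono (Ioc_subset_Ioc_left hβpos.le))
              _ ≤ C * lam₀ ^ α := hsmall n lam₀ hlam₀ le_rfl
    -- bound (c)
    have hCbound : (∫ l in Ioi lam₀, Real.exp (-l * t) ∂(μ n))
        ≤ Real.exp (lam₀ * (1 - t)) * c := by
      have step1 : (∫ l in Ioi lam₀, Real.exp (-l * t) ∂(μ n))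
          ≤ ∫ l in Ioi lam₀, Real.exp (lam₀ * (1 - t)) * Real.exp (-l) ∂(μ n) := by
        refine setIntegral_mono_on hIt.integrableOn
          (((hintble n).const_mul _).integrableOn) measurableSet_Ioi ?_
        intro x hx
        rw [← Real.exp_add]
        refine Real.exp_le_exp.2 ?_
        have hx' : lam₀ ≤ x := le_of_lt hx
        nlinarith
      have step2 : (∫ l in Ioi lam₀, Real.exp (lam₀ * (1 - t)) * Real.exp (-l) ∂(μ n))
          = Real.exp (lam₀ * (1 - t)) * ∫ l in Ioi lam₀, Real.exp (-l) ∂(μ n) :=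
        integral_const_mul _ _
      have step3 : (∫ l in Ioi lam₀, Real.exp (-l) ∂(μ n)) ≤ c :=
        le_trans (setIntegral_le_integral (hintble n)
          (Eventually.of_forall fun l => (Real.exp_pos _).le)) (hint n)
      calc (∫ l in Ioi lam₀, Real.exp (-l * t) ∂(μ n))
          ≤ Real.exp (lam₀ * (1 - t)) * ∫ l in Ioi lam₀, Real.exp (-l) ∂(μ n) := by
            rw [← step2]; exact step1
        _ ≤ Real.exp (lam₀ * (1 - t)) * c :=
            mul_le_mul_of_nonneg_left step3 (Real.exp_nonneg _)
    -- term bounds after dividing by t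
    have hT2 : t ^ (-2 : ℝ) = (t ^ 2)⁻¹ := by
      rw [show (-2 : ℝ) = -((2:ℕ):ℝ) by norm_num, Real.rpow_neg htpos.le, Real.rpow_natCast]
    have hT3' : t ^ (-3 : ℝ) = (t ^ 3)⁻¹ := by
      rw [show (-3 : ℝ) = -((3:ℕ):ℝ) by norm_num, Real.rpow_neg htpos.le, Real.rpow_natCast]
    have hL1 : C * β ^ α / t ≤ C * 2 ^ α * t ^ (-1 - δ : ℝ) := by
      have hsqrtpos : 0 < Real.sqrt t := Real.sqrt_pos.2 htpos
      have hinv : (Real.sqrt t)⁻¹ * t = Real.sqrt t := by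
        field_simp
        exact hsq.symm
      have hthalf : t ^ (-(1/2) : ℝ) = (Real.sqrt t)⁻¹ := by
        rw [Real.rpow_neg htpos.le, ← Real.sqrt_eq_rpow]
      have hβle : β ≤ 2 * t ^ (-(1/2) : ℝ) := by
        rw [hthalf, hβdef, div_le_iff₀ htpos, mul_assoc, hinv]
        exact hsqrt
      have h1 : β ^ α ≤ 2 ^ α * t ^ (-(α/2) : ℝ) := by
        calc β ^ α ≤ (2 * t ^ (-(1/2) : ℝ)) ^ α := Real.rpow_le_rpow hβpos.le hβle hα.le
          _ = 2 ^ α * (t ^ (-(1/2) : ℝ)) ^ α :=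
              Real.mul_rpow (by norm_num) (Real.rpow_nonneg htpos.le _)
          _ = 2 ^ α * t ^ (-(α/2) : ℝ) := by
              rw [← Real.rpow_mul htpos.le, show ((-(1/2) : ℝ) * α) = -(α/2) by ring]
      calc C * β ^ α / t ≤ C * (2 ^ α * t ^ (-(α/2) : ℝ)) / t :=
            (div_le_div_iff_of_pos_right htpos).2 (mul_le_mul_of_nonneg_left h1 hC.le)
        _ = C * 2 ^ α * (t ^ (-(α/2) : ℝ) * t ^ (-1 : ℝ)) := by
            rw [Real.rpow_neg_one]; ring
        _ = C * 2 ^ α * t ^ (-(α/2) + -1 : ℝ) := by rw [← Real.rpow_add htpos]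
        _ ≤ C * 2 ^ α * t ^ (-1 - δ : ℝ) := by
            refine mul_le_mul_of_nonneg_left
              (Real.rpow_le_rpow_of_exponent_le ht1 (by linarith)) (by positivity)
    have hL2 : Real.exp (-Real.log t) * (C * lam₀ ^ α) / t
        ≤ C * lam₀ ^ α * t ^ (-1 - δ : ℝ) := by
      rw [Real.exp_neg, Real.exp_log htpos]
      have heq : t⁻¹ * (C * lam₀ ^ α) / t = C * lam₀ ^ α * (t ^ 2)⁻¹ := by
        field_simp
      rw [heq, ← hT2]
      exact mul_le_mul_of_nonneg_left
        (Real.rpow_le_rpow_of_exponent_le ht1 (by linarith)) (by positivity)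
    have hL3 : Real.exp (lam₀ * (1 - t)) * c / t
        ≤ 27 * c * Real.exp lam₀ / lam₀ ^ 3 * t ^ (-1 - δ : ℝ) := by
      have hx : 0 < lam₀ * t := mul_pos hlam₀ htpos
      have hexp3 : Real.exp (-(lam₀ * t)) ≤ 27 / (lam₀ * t) ^ 3 := by
        have h1 : lam₀ * t / 3 ≤ Real.exp (lam₀ * t / 3) := by
          linarith [Real.add_one_le_exp (lam₀ * t / 3)]
        have h2 : (lam₀ * t / 3) ^ 3 ≤ Real.exp (lam₀ * t / 3) ^ 3 :=
          pow_le_pow_left₀ (by positivity) h1 3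
        have h3 : Real.exp (lam₀ * t / 3) ^ 3 = Real.exp (lam₀ * t) := by
          rw [← Real.exp_nat_mul]
          congr 1
          push_cast
          ring
        have h4 : (lam₀ * t) ^ 3 / 27 ≤ Real.exp (lam₀ * t) := by nlinarith [h2, h3]
        rw [Real.exp_neg, inv_eq_one_div, div_le_div_iff₀ (Real.exp_pos _) (by positivity)]
        nlinarith [h4, Real.exp_pos (lam₀ * t)]
      have h6 : Real.exp (lam₀ * (1 - t)) = Real.exp lam₀ * Real.exp (-(lam₀ * t)) := by
        rw [← Real.exp_add]; congr 1; ring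
      have h7 : Real.exp (lam₀ * (1 - t)) * c / t ≤ Real.exp (lam₀ * (1 - t)) * c :=
        div_le_self (by positivity) ht1
      have h8 : Real.exp (lam₀ * (1 - t)) * c
          ≤ Real.exp lam₀ * (27 / (lam₀ * t) ^ 3) * c := by
        rw [h6]
        have := mul_le_mul_of_nonneg_left hexp3 (Real.exp_nonneg lam₀)
        exact mul_le_mul_of_nonneg_right this hc.le
      have h9 : Real.exp lam₀ * (27 / (lam₀ * t) ^ 3) * c
          = 27 * c * Real.exp lam₀ / lam₀ ^ 3 * t ^ (-3 : ℝ) := by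
        rw [hT3']
        field_simp
      have h10 : 27 * c * Real.exp lam₀ / lam₀ ^ 3 * t ^ (-3 : ℝ)
          ≤ 27 * c * Real.exp lam₀ / lam₀ ^ 3 * t ^ (-1 - δ : ℝ) :=
        mul_le_mul_of_nonneg_left
          (Real.rpow_le_rpow_of_exponent_le ht1 (by linarith)) (by positivity)
      linarith [h7, h8, h9.le, h9.ge, h10]
    -- combine
    have hsum : (∫ l in Ioi (0:ℝ), Real.exp (-l * t) ∂(μ n))
        ≤ C * β ^ α + Real.exp (-Real.log t) * (C * lam₀ ^ α)
          + Real.exp (lam₀ * (1 - t)) * c := by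
      rw [hsplit1, hsplit2]; linarith
    calc (∫ l in Ioi (0:ℝ), Real.exp (-l * t) ∂(μ n)) / t
        ≤ (C * β ^ α + Real.exp (-Real.log t) * (C * lam₀ ^ α)
            + Real.exp (lam₀ * (1 - t)) * c) / t := by gcongr
      _ = C * β ^ α / t + Real.exp (-Real.log t) * (C * lam₀ ^ α) / t
            + Real.exp (lam₀ * (1 - t)) * c / t := by ring
      _ ≤ C * 2 ^ α * t ^ (-1 - δ : ℝ) + C * lam₀ ^ α * t ^ (-1 - δ : ℝ)
            + 27 * c * Real.exp lam₀ / lam₀ ^ 3 * t ^ (-1 - δ : ℝ) := by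
          linarith
      _ = K * t ^ (-1 - δ : ℝ) := by rw [hKdef]; ring
  -- assemble
  have hg_int : IntegrableOn (fun t : ℝ => K * t ^ (-1 - δ : ℝ)) (Ioi t₀) :=
    (integrableOn_Ioi_rpow_of_lt (by linarith) ht₀pos).const_mul K
  have hmono : (∫ t in Ioi t₀, (∫ l in Ioi (0:ℝ), Real.exp (-l * t) ∂(μ n)) / t)
      ≤ ∫ t in Ioi t₀, K * t ^ (-1 - δ : ℝ) := by
    refine integral_mono_of_nonneg ?_ hg_int ?_
    · filter_upwards [ae_restrict_mem measurableSet_Ioi] with t ht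
      have h1 : 0 ≤ ∫ l in Ioi (0:ℝ), Real.exp (-l * t) ∂(μ n) :=
        integral_nonneg fun l => (Real.exp_pos _).le
      have : (0:ℝ) < t := lt_trans ht₀pos ht
      exact div_nonneg h1 this.le
    · filter_upwards [ae_restrict_mem measurableSet_Ioi] with t ht
      exact key t ht
  have hval : (∫ t in Ioi t₀, K * t ^ (-1 - δ : ℝ)) = K * (t₀ ^ (-δ : ℝ) / δ) := by
    rw [integral_const_mul, integral_Ioi_rpow_of_lt (by linarith) ht₀pos,
      show (-1 - δ + 1 : ℝ) = -δ by ring, neg_div_neg_eq]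
  have hfinal : K * (t₀ ^ (-δ : ℝ) / δ) ≤ ε := by
    have h1 : X ≤ t₀ ^ (δ : ℝ) := by
      calc X = (X ^ (1/δ : ℝ)) ^ (δ : ℝ) := by
            rw [← Real.rpow_mul hXpos.le, one_div_mul_cancel hδ.ne', Real.rpow_one]
        _ ≤ t₀ ^ (δ : ℝ) :=
            Real.rpow_le_rpow (Real.rpow_nonneg hXpos.le _) ht₀X hδ.le
    have h2 : t₀ ^ (-δ : ℝ) ≤ X⁻¹ := by
      rw [Real.rpow_neg ht₀pos.le]
      exact inv_anti₀ hXpos h1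
    have h3 : K * (X⁻¹ / δ) = ε := by
      rw [hXdef]; field_simp
    calc K * (t₀ ^ (-δ : ℝ) / δ) ≤ K * (X⁻¹ / δ) := by gcongr
      _ = ε := h3
  calc (∫ t in Ioi t₀, (∫ l in Ioi (0:ℝ), Real.exp (-l * t) ∂(μ n)) / t)
      ≤ ∫ t in Ioi t₀, K * t ^ (-1 - δ : ℝ) := hmono
    _ = K * (t₀ ^ (-δ : ℝ) / δ) := hval
    _ ≤ ε := hfinal
end
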